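/- arXiv:2105.07736 — 2 statements merged into one kernel-verified Lean document; each statement's English description precedes it below -/
import Mathlib

section
/- (Brady–Watt formula) Let A be an m×n real matrix with no zero rows and rows A_1^T,…,A_m^T. Suppose W is the lower-triangular m×m matrix satisfying W + W^T = 2AA^T and W is invertible. Then the product of reflections R_A = R_m ⋯ R_1, where R_i = I_n - 2 A_i A_i^T/‖A_i‖², equals I_n - 2 A^T W^{-1} A. -/
open Matrix

/-- The Householder reflection determined by a (nonzero) vector `a`. -/
noncomputable def reflOf {n : ℕ} (a : Fin n → ℝ) : Matrix (Fin n) (Fin n) ℝ :=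
  1 - (2 / (∑ j, a j ^ 2)) • Matrix.vecMulVec a a

/-- The product `R_m ⋯ R_2 R_1` of the Householder reflections of the rows of `A`. -/
noncomputable def reflProd {m n : ℕ} (A : Matrix (Fin m) (Fin n) ℝ) :
    Matrix (Fin n) (Fin n) ℝ :=
  (((List.finRange m).map (fun i => reflOf (A i))).reverse).prod

/-!
Solve `W X = A` by forward substitution. Since `W₀₀ = ‖A₀‖²` and the first row of `W` vanishes
off the diagonal, `X₀ = A₀ / ‖A₀‖²`, so that `R₁ = I - 2 A₀ X₀ᵀ`. Eliminating `X₀` from the remaining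
equations uses `W_{i0} = 2⟨Aᵢ, A₀⟩` and leaves `W' X' = A' R₁` for the trailing blocks. As `R₁` is an
involution, `X' R₁` solves the smaller system, and induction gives
`R_m ⋯ R₂ = I - 2 A'ᵀ X' R₁`; multiplying by `R₁` on the right yields `I - 2 A₀ X₀ᵀ - 2 A'ᵀ X' = I - 2 Aᵀ X`.
-/

namespace Matrix

section Peel

variable {α : Type*} [CommRing α] {m n : ℕ}

theorem transpose_mul_eq_vecMulVec_add {k : Type*} (A : Matrix (Fin (m + 1)) k α)
    (X : Matrix (Fin (m + 1)) (Fin n) α) :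
    Aᵀ * X = vecMulVec (A 0) (X 0) + (A.submatrix Fin.succ id)ᵀ * X.submatrix Fin.succ id := by
  ext p q
  simp [mul_apply, Fin.sum_univ_succ, vecMulVec_apply]

theorem submatrix_succ_mul_submatrix_succ {k : Type*} [Fintype k]
    (W : Matrix (Fin (m + 1)) (Fin (m + 1)) α) (X : Matrix (Fin (m + 1)) k α) :
    W.submatrix Fin.succ Fin.succ * X.submatrix Fin.succ id =
      (W * X).submatrix Fin.succ id - vecMulVec (fun i => W i.succ 0) (X 0) := by
  ext i q
  simp [mul_apply, Fin.sum_univ_succ, vecMulVec_apply]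

theorem mul_row_zero_of_lower {W : Matrix (Fin (m + 1)) (Fin (m + 1)) α}
    (hlow : ∀ i j, i < j → W i j = 0) (X : Matrix (Fin (m + 1)) (Fin n) α) :
    (W * X) 0 = W 0 0 • X 0 := by
  ext q
  simp [mul_apply, Fin.sum_univ_succ, hlow 0 _ (Fin.succ_pos _)]

end Peel

section GramRelation

variable {m n : ℕ} {A : Matrix (Fin (m + 1)) (Fin n) ℝ} {W : Matrix (Fin (m + 1)) (Fin (m + 1)) ℝ}

theorem apply_zero_zero_of_add_transpose (hW : W + Wᵀ = (2 : ℝ) • (A * Aᵀ)) :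
    W 0 0 = ∑ j, A 0 j ^ 2 := by
  have h := congrFun (congrFun hW 0) 0
  simp only [add_apply, transpose_apply, smul_apply, mul_apply, smul_eq_mul] at h
  simp only [sq]
  linarith

theorem apply_succ_zero_of_add_transpose (hlow : ∀ i j, i < j → W i j = 0)
    (hW : W + Wᵀ = (2 : ℝ) • (A * Aᵀ)) (i : Fin m) :
    W i.succ 0 = ((2 : ℝ) • (A.submatrix Fin.succ id *ᵥ A 0)) i := by
  simpa [hlow 0 i.succ (Fin.succ_pos i), mul_apply, mulVec, dotProduct] using
    congrFun (congrFun hW i.succ) 0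

theorem submatrix_succ_add_transpose (hW : W + Wᵀ = (2 : ℝ) • (A * Aᵀ)) :
    W.submatrix Fin.succ Fin.succ + (W.submatrix Fin.succ Fin.succ)ᵀ =
      (2 : ℝ) • (A.submatrix Fin.succ id * (A.submatrix Fin.succ id)ᵀ) := by
  ext i j
  simpa [mul_apply] using congrFun (congrFun hW i.succ) j.succ

end GramRelation

end Matrix

-- For `a = 0` both sides are `1`: `reflOf 0 = 1` because `2 / 0 = 0`.
theorem reflOf_eq_one_sub_vecMulVec {n : ℕ} {a x : Fin n → ℝ} (h : (∑ j, a j ^ 2) • x = a) :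
    reflOf a = 1 - (2 : ℝ) • vecMulVec a x := by
  set s := ∑ j, a j ^ 2
  rcases eq_or_ne s 0 with hs | hs
  · rw [hs, zero_smul] at h
    simp [reflOf, ← h]
  · have hV : vecMulVec a a = s • vecMulVec a x := by rw [← vecMulVec_smul, h]
    rw [reflOf, hV, smul_smul, div_mul_cancel₀ _ hs]

theorem reflOf_mul_self {n : ℕ} (a : Fin n → ℝ) : reflOf a * reflOf a = 1 := by
  set s := ∑ j, a j ^ 2
  have hsq : vecMulVec a a * vecMulVec a a = s • vecMulVec a a := by
    rw [vecMulVec_mul_vecMulVec, vecMulVec_smul]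
    simp only [s, dotProduct, sq]
  have hcoef : 2 / s * (2 / s) * s = 2 * (2 / s) := by
    rcases eq_or_ne s 0 with hs | hs
    · simp [hs]
    · field_simp
  rw [reflOf, sub_mul, mul_sub, mul_sub, one_mul, mul_one, one_mul, smul_mul_smul, hsq,
    smul_smul, hcoef]
  module

theorem reflProd_succ {m n : ℕ} (A : Matrix (Fin (m + 1)) (Fin n) ℝ) :
    reflProd A = reflProd (A.submatrix Fin.succ id) * reflOf (A 0) := by
  simp [reflProd, List.finRange_succ, Function.comp_def]
  rfl

theorem reflProd_eq_one_sub_of_mul_eq {m n : ℕ} (A : Matrix (Fin m) (Fin n) ℝ)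
    (W : Matrix (Fin m) (Fin m) ℝ) (hlow : ∀ i j, i < j → W i j = 0)
    (hW : W + Wᵀ = (2 : ℝ) • (A * Aᵀ)) {X : Matrix (Fin m) (Fin n) ℝ} (hX : W * X = A) :
    reflProd A = 1 - (2 : ℝ) • (Aᵀ * X) := by
  induction m with
  | zero => simp [reflProd]
  | succ m ih =>
    set A' := A.submatrix Fin.succ id
    set W' := W.submatrix Fin.succ Fin.succ
    set X' := X.submatrix Fin.succ id
    have hX0 : (∑ j, A 0 j ^ 2) • X 0 = A 0 := by
      rw [← apply_zero_zero_of_add_transpose hW, ← mul_row_zero_of_lower hlow, hX]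
    have hR := reflOf_eq_one_sub_vecMulVec hX0
    have hX' : W' * X' = A' * reflOf (A 0) := by
      rw [submatrix_succ_mul_submatrix_succ, hX,
        funext (apply_succ_zero_of_add_transpose hlow hW), hR, Matrix.mul_sub, Matrix.mul_one,
        Matrix.mul_smul, mul_vecMulVec, smul_vecMulVec]
    have hY : W' * (X' * reflOf (A 0)) = A' := by
      rw [← Matrix.mul_assoc, hX', Matrix.mul_assoc, reflOf_mul_self, Matrix.mul_one]
    rw [reflProd_succ, ih A' W' (fun i j h => hlow _ _ (Fin.succ_lt_succ_iff.mpr h))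
      (submatrix_succ_add_transpose hW) hY, transpose_mul_eq_vecMulVec_add, sub_mul, one_mul,
      smul_mul, Matrix.mul_assoc, Matrix.mul_assoc, reflOf_mul_self, Matrix.mul_one, hR]
    module

theorem brady_watt_general (m n : ℕ) (A : Matrix (Fin m) (Fin n) ℝ)
    (W : Matrix (Fin m) (Fin m) ℝ)
    (hlow : ∀ i j : Fin m, i < j → W i j = 0)
    (hW : W + Wᵀ = (2 : ℝ) • (A * Aᵀ))
    (hWinv : IsUnit W.det) :
    reflProd A = 1 - (2 : ℝ) • (Aᵀ * W⁻¹ * A) := by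
  have hX : W * (W⁻¹ * A) = A := by
    rw [← Matrix.mul_assoc, mul_nonsing_inv _ hWinv, Matrix.one_mul]
  rw [Matrix.mul_assoc]
  exact reflProd_eq_one_sub_of_mul_eq A W hlow hW hX

/-- Brady–Watt formula: if `W` is lower triangular, invertible, and
`W + Wᵀ = 2AAᵀ`, then `R_A = I - 2 Aᵀ W⁻¹ A`. -/
theorem brady_watt (m n : ℕ) (A : Matrix (Fin m) (Fin n) ℝ) (hA : ∀ i, A i ≠ 0)
    (W : Matrix (Fin m) (Fin m) ℝ)
    (hlow : ∀ i j : Fin m, i < j → W i j = 0)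
    (hW : W + Wᵀ = (2 : ℝ) • (A * Aᵀ))
    (hWinv : IsUnit W.det) :
    reflProd A = 1 - (2 : ℝ) • (Aᵀ * W⁻¹ * A) :=
  brady_watt_general m n A W hlow hW hWinv
end

section
/- Let A ∈ ℝ^{m×n} have full row rank m, with no zero rows, and let W be the invertible lower-triangular matrix with W + W^T = 2AA^T. If a vector u ∈ ℝ^n satisfies R_A u = u, where R_A = R_m ⋯ R_1 is the product of the row reflections of A, then A u = 0. Conversely, if A u = 0 then R_A u = u. Hence the fixed space of R_A equals the kernel of A, and 1 is an eigenvalue of R_A with multiplicity exactly n - m. -/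
/-!
Write `R_A = R' R_1`, where `R'` is the product of the reflections in the remaining rows
`a_2, …, a_m`. Each reflection moves a vector only by a multiple of its own row, so
`R' v - v ∈ span {a_2, …, a_m}` for every `v`. If `R_A u = u`, then
`u - R_1 u = R' (R_1 u) - R_1 u` lies in that span; but it is a multiple of `a_1`, which is not in
the span because the rows are independent, so `R_1 u = u`, i.e. `a_1 ⬝ u = 0`, and `R' u = u`
lets the induction continue. The dimension count is then rank–nullity for `A`.
-/

open Matrix

lemma Matrix.linearIndependent_row_of_rank_eq_card {K ι κ : Type*} [Field K] [Fintype ι]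
    [Fintype κ] {A : Matrix ι κ K} (hA : A.rank = Fintype.card ι) : LinearIndependent K A.row := by
  rw [linearIndependent_iff_card_eq_finrank_span, Set.finrank, ← rank_eq_finrank_span_row, hA]

lemma Matrix.rank_add_finrank_ker_toLin' {K ι κ : Type*} [Field K] [Fintype ι] [Fintype κ]
    [DecidableEq κ] (A : Matrix ι κ K) :
    A.rank + Module.finrank K (LinearMap.ker (toLin' A)) = Fintype.card κ := by
  rw [rank, ← toLin'_apply', LinearMap.finrank_range_add_finrank_ker,
    Module.finrank_fintype_fun_eq_card]

section

variable {m n : ℕ}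

lemma reflOf_mulVec (a u : Fin n → ℝ) :
    reflOf a *ᵥ u = u - ((2 / ∑ j, a j ^ 2) * (a ⬝ᵥ u)) • a := by
  ext i
  simp only [reflOf, sub_mulVec, smul_mulVec, one_mulVec, vecMulVec_mulVec, Pi.sub_apply,
    Pi.smul_apply, op_smul_eq_smul, smul_eq_mul]
  ring

lemma reflOf_mulVec_eq_self_iff {a : Fin n → ℝ} (ha : a ≠ 0) (u : Fin n → ℝ) :
    reflOf a *ᵥ u = u ↔ a ⬝ᵥ u = 0 := by
  have hs : (∑ j, a j ^ 2) ≠ 0 := by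
    simpa [← dotProduct_self_eq_zero, dotProduct, sq] using ha
  rw [reflOf_mulVec, sub_eq_self, smul_eq_zero, or_iff_left ha, mul_eq_zero,
    or_iff_right (div_ne_zero two_ne_zero hs)]

lemma reflOf_mulVec_eq_self_of_sub_mem {a u : Fin n → ℝ} {S : Submodule ℝ (Fin n → ℝ)}
    (ha : a ∉ S) (h : u - reflOf a *ᵥ u ∈ S) : reflOf a *ᵥ u = u := by
  rw [reflOf_mulVec, sub_sub_cancel] at h
  by_contra hne
  rw [reflOf_mulVec, sub_eq_self] at hne
  exact ha ((Submodule.smul_mem_iff S (left_ne_zero_of_smul hne)).mp h)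

-- Stated for a family of rows rather than a `Matrix`, so that it rewrites the goals
-- produced by `Fin.consInduction`.
lemma reflProd_cons (a : Fin n → ℝ) (A : Fin m → Fin n → ℝ) :
    reflProd (Fin.cons a A) = reflProd A * reflOf a := by
  simp [reflProd, List.finRange_succ, List.map_map, Function.comp_def]

lemma reflProd_mulVec_sub_self_mem_span (A : Matrix (Fin m) (Fin n) ℝ) (u : Fin n → ℝ) :
    reflProd A *ᵥ u - u ∈ Submodule.span ℝ (Set.range A) := by
  induction A using Fin.consInduction generalizing u with
  | elim0 => simp [reflProd]
  | cons a A ih =>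
    rw [reflProd_cons, ← mulVec_mulVec, ← sub_add_sub_cancel _ (reflOf a *ᵥ u), Fin.range_cons]
    refine add_mem (Submodule.span_mono (Set.subset_insert _ _) (ih _)) ?_
    rw [reflOf_mulVec, sub_sub_cancel_left, ← neg_smul]
    exact Submodule.smul_mem _ _ (Submodule.subset_span (Set.mem_insert _ _))

lemma reflProd_mulVec_eq_self_of_mulVec_eq_zero (A : Matrix (Fin m) (Fin n) ℝ) {u : Fin n → ℝ}
    (hu : A *ᵥ u = 0) : reflProd A *ᵥ u = u := by
  induction A using Fin.consInduction with
  | elim0 => simp [reflProd]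
  | cons a A ih =>
    have hau : a ⬝ᵥ u = 0 := congrFun hu 0
    rw [reflProd_cons, ← mulVec_mulVec, reflOf_mulVec, hau, mul_zero, zero_smul, sub_zero]
    exact ih (funext fun i => congrFun hu i.succ)

lemma mulVec_eq_zero_of_reflProd_mulVec_eq_self {A : Matrix (Fin m) (Fin n) ℝ}
    (hA : LinearIndependent ℝ A) {u : Fin n → ℝ} (hu : reflProd A *ᵥ u = u) :
    A *ᵥ u = 0 := by
  induction A using Fin.consInduction generalizing u with
  | elim0 => exact Subsingleton.elim _ _
  | cons a A ih =>
    obtain ⟨hA, ha⟩ := linearIndependent_finCons.mp hA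
    rw [reflProd_cons, ← mulVec_mulVec] at hu
    have hfix : reflOf a *ᵥ u = u := by
      refine reflOf_mulVec_eq_self_of_sub_mem ha ?_
      nth_rewrite 1 [← hu]
      exact reflProd_mulVec_sub_self_mem_span A _
    rw [hfix] at hu
    have ha0 : a ≠ 0 := fun h => ha (h ▸ zero_mem _)
    funext i
    refine Fin.cases ?_ (fun i => congrFun (ih hA hu) i) i
    exact (reflOf_mulVec_eq_self_iff ha0 u).mp hfix

lemma reflProd_mulVec_eq_self_iff {A : Matrix (Fin m) (Fin n) ℝ} (hA : LinearIndependent ℝ A)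
    (u : Fin n → ℝ) : reflProd A *ᵥ u = u ↔ A *ᵥ u = 0 :=
  ⟨mulVec_eq_zero_of_reflProd_mulVec_eq_self hA, reflProd_mulVec_eq_self_of_mulVec_eq_zero A⟩

lemma ker_toLin'_reflProd_sub_one {A : Matrix (Fin m) (Fin n) ℝ} (hA : LinearIndependent ℝ A) :
    LinearMap.ker (toLin' (reflProd A - 1)) = LinearMap.ker (toLin' A) := by
  ext u
  simp only [LinearMap.mem_ker, toLin'_apply, sub_mulVec, one_mulVec, sub_eq_zero]
  exact reflProd_mulVec_eq_self_iff hA u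

end

theorem fixed_space_eq_kernel_general (m n : ℕ) (A : Matrix (Fin m) (Fin n) ℝ)
    (hrank : A.rank = m) :
    (∀ u : Fin n → ℝ, (reflProd A).mulVec u = u ↔ A.mulVec u = 0) ∧
    Module.finrank ℝ (LinearMap.ker (Matrix.toLin' (reflProd A - 1))) = n - m := by
  have hA : LinearIndependent ℝ A :=
    linearIndependent_row_of_rank_eq_card (hrank.trans (Fintype.card_fin m).symm)
  refine ⟨reflProd_mulVec_eq_self_iff hA, ?_⟩
  have hdim := A.rank_add_finrank_ker_toLin'
  rw [hrank, Fintype.card_fin] at hdim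
  rw [ker_toLin'_reflProd_sub_one hA]
  omega

/-- if `A` has full row rank `m`, then `R_A u = u ↔ A u = 0`;
hence the fixed space of `R_A` is the kernel of `A` and `1` is an eigenvalue
of `R_A` with multiplicity exactly `n - m`. -/
theorem fixed_space_eq_kernel (m n : ℕ) (A : Matrix (Fin m) (Fin n) ℝ)
    (hA : ∀ i, A i ≠ 0) (hrank : A.rank = m)
    (W : Matrix (Fin m) (Fin m) ℝ)
    (hlow : ∀ i j : Fin m, i < j → W i j = 0)
    (hW : W + Wᵀ = (2 : ℝ) • (A * Aᵀ))
    (hWinv : IsUnit W.det) :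
    (∀ u : Fin n → ℝ, (reflProd A).mulVec u = u ↔ A.mulVec u = 0) ∧
    Module.finrank ℝ (LinearMap.ker (Matrix.toLin' (reflProd A - 1))) = n - m :=
  fixed_space_eq_kernel_general m n A hrank
end
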